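/- Assume k − 1 ≤ LR. The part incoming weights of π^(k) are nonincreasing over the cluster positions, i.e. w_1(π^(k)) ≥ w_2(π^(k)) ≥ … ≥ w_{k−1}(π^(k)); moreover the weight of the separate position, w_k(π^(k)) = (R + d_C − k)·β_C = (d_I + d_C + 1 − k)·β_C, is the minimum: w_k(π^(k)) ≤ w_i(π^(k)) for every 1 ≤ i ≤ k. -/

import Mathlib

/-!
Every weight dominates `(d_I + d_C + 1 − i)·β_C`, because `a_i + b_i ≥ d_I + d_C + 1 − i` and
`β_I ≥ β_C`; at the separate position `k` this bound is attained and is smallest over `i ≤ k`.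
On the cluster positions `1, …, k − 1` of a vertical order the relative location `h` grows by `0`
or `1` at each step: the previous member `j ≤ i` of the cluster of position `i + 1` has
`h(j) = h(i + 1) − 1`, and `h(j) ≤ h(i)` by the vertical order. Hence `a_i` and `i − h(i)` are both
monotone in the right direction, and the weights are nonincreasing.
-/

/-- Relative location `h_π(i) = #{1 ≤ j ≤ i : π j = π i}`. -/
def relLoc (π : ℕ → ℕ) (i : ℕ) : ℕ :=
  ((Finset.Icc 1 i).filter (fun j => π j = π i)).card

/-- Intra-cluster coefficient `a_i(π) = d_I + 1 − h_π(i)` (truncated subtraction). -/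
def aCoef (dI : ℕ) (π : ℕ → ℕ) (i : ℕ) : ℕ :=
  dI + 1 - relLoc π i

/-- Cross-cluster coefficient `b_i(π) = max(0, d_C − (i − h_π(i)))` (truncated subtraction). -/
def bCoef (dC : ℕ) (π : ℕ → ℕ) (i : ℕ) : ℕ :=
  dC - (i - relLoc π i)

/-- Part incoming weight `w_i(π)`: for a separate position (`π i = 0`) it is
`(d_I + d_C + 1 − i)·β_C`, otherwise `a_i(π)·β_I + b_i(π)·β_C`. -/
noncomputable def weight (dI dC : ℕ) (βI βC : ℝ) (π : ℕ → ℕ) (i : ℕ) : ℝ :=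
  if π i = 0 then ((dI + dC + 1 - i : ℕ) : ℝ) * βC
  else (aCoef dI π i : ℝ) * βI + (bCoef dC π i : ℝ) * βC

/-- Min-cut `MC(π) = Σ_{i=1}^k min(α, w_i(π))`. -/
noncomputable def MC (k dI dC : ℕ) (βI βC α : ℝ) (π : ℕ → ℕ) : ℝ :=
  ∑ i ∈ Finset.Icc 1 k, min α (weight dI dC βI βC π i)

/-- A cluster order: a `k`-tuple with entries in `{0, 1, …, L}`. -/
def IsClusterOrder (L k : ℕ) (π : ℕ → ℕ) : Prop :=
  ∀ i, 1 ≤ i → i ≤ k → π i ≤ L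

/-- A selected node distribution `(s_0, s_1, …, s_L)`:
`R ≥ s_1 ≥ s_2 ≥ … ≥ s_L` and `s_0 + s_1 + … + s_L = k`. -/
def IsDist (L R k : ℕ) (s : ℕ → ℕ) : Prop :=
  (∀ i, 1 ≤ i → i + 1 ≤ L → s (i + 1) ≤ s i) ∧
  (∀ i, 1 ≤ i → i ≤ L → s i ≤ R) ∧
  ∑ i ∈ Finset.range (L + 1), s i = k

/-- `π ∈ Π(s)`: `π` is a cluster order with `#{1 ≤ j ≤ k : π j = c} = s c` for all `0 ≤ c ≤ L`. -/
def MemPi (L k : ℕ) (s : ℕ → ℕ) (π : ℕ → ℕ) : Prop :=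
  IsClusterOrder L k π ∧
  ∀ c, c ≤ L → ((Finset.Icc 1 k).filter (fun j => π j = c)).card = s c

/-- Vertical order of distribution `s` (possibly with separate entries, whose positions are
not constrained here):  over the cluster positions (`π i ≠ 0`) in increasing order, relative
locations are nondecreasing, with ties broken by increasing cluster index. -/
def IsVerticalOrder (L k : ℕ) (s : ℕ → ℕ) (π : ℕ → ℕ) : Prop :=
  MemPi L k s π ∧
  ∀ i j, 1 ≤ i → i < j → j ≤ k → π i ≠ 0 → π j ≠ 0 →
    relLoc π i ≤ relLoc π j ∧ (relLoc π i = relLoc π j → π i < π j)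

/-- The distribution `s*` (no separate node): `s*_0 = 0`, `s*_i = R` for `1 ≤ i ≤ ⌊k/R⌋`,
`s*_{⌊k/R⌋+1} = k − ⌊k/R⌋·R`, and `0` beyond. -/
def sStar0 (R k : ℕ) : ℕ → ℕ := fun i =>
  if i = 0 then 0
  else if i ≤ k / R then R
  else if i = k / R + 1 then k - k / R * R
  else 0

/-- The distribution with one separate node: `s_0 = 1`, `s_i = R` for `1 ≤ i ≤ ⌊(k−1)/R⌋`,
`s_{⌊(k−1)/R⌋+1} = (k−1) − ⌊(k−1)/R⌋·R`, and `0` beyond. -/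
def sStar1 (R k : ℕ) : ℕ → ℕ := fun i =>
  if i = 0 then 1
  else if i ≤ (k - 1) / R then R
  else if i = (k - 1) / R + 1 then (k - 1) - (k - 1) / R * R
  else 0

/-- `π^(j)`: the cluster order with exactly one separate entry, located at position `j`,
whose cluster entries form the vertical order of the distribution `sStar1 R k`. -/
def IsPiJ (L R k j : ℕ) (π : ℕ → ℕ) : Prop :=
  π j = 0 ∧ IsVerticalOrder L k (sStar1 R k) π

open Finset

lemma relLoc_pos {π : ℕ → ℕ} {i : ℕ} (hi : 1 ≤ i) : 1 ≤ relLoc π i :=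
  card_pos.mpr ⟨i, by simp [hi]⟩

lemma relLoc_le (π : ℕ → ℕ) (i : ℕ) : relLoc π i ≤ i :=
  (card_filter_le _ _).trans (by simp)

lemma relLoc_succ (π : ℕ → ℕ) (i : ℕ) :
    relLoc π (i + 1) = #{j ∈ Icc 1 i | π j = π (i + 1)} + 1 := by
  rw [relLoc, ← insert_Icc_right_eq_Icc_add_one (by omega), filter_insert, if_pos rfl,
    card_insert_of_notMem (by simp)]

lemma exists_relLoc_add_one_eq {π : ℕ → ℕ} {i : ℕ} (h : 2 ≤ relLoc π (i + 1)) :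
    ∃ j, 1 ≤ j ∧ j ≤ i ∧ π j = π (i + 1) ∧ relLoc π j + 1 = relLoc π (i + 1) := by
  rw [relLoc_succ] at h
  set S := {j ∈ Icc 1 i | π j = π (i + 1)}
  have hS : S.Nonempty := card_pos.mp (by omega)
  have hj : S.max' hS ∈ S := max'_mem S hS
  simp only [S, mem_filter, mem_Icc] at hj
  refine ⟨S.max' hS, hj.1.1, hj.1.2, hj.2, ?_⟩
  have hSj : {j ∈ Icc 1 (S.max' hS) | π j = π (S.max' hS)} = S := by
    ext x
    have hx : x ∈ S → x ≤ S.max' hS := le_max' S x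
    simp only [S, mem_filter, mem_Icc] at hx ⊢
    constructor
    · rintro ⟨⟨h1, h2⟩, h3⟩
      exact ⟨⟨h1, h2.trans hj.1.2⟩, h3.trans hj.2⟩
    · rintro ⟨⟨h1, h2⟩, h3⟩
      exact ⟨⟨h1, hx ⟨⟨h1, h2⟩, h3⟩⟩, h3.trans hj.2.symm⟩
  rw [relLoc, hSj, relLoc_succ]

namespace IsVerticalOrder

variable {L k : ℕ} {s π : ℕ → ℕ}

lemma relLoc_le_relLoc_succ (hv : IsVerticalOrder L k s π) {i : ℕ} (hi : 1 ≤ i)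
    (hik : i + 1 ≤ k) (h₀ : π i ≠ 0) (h₁ : π (i + 1) ≠ 0) : relLoc π i ≤ relLoc π (i + 1) :=
  (hv.2 i (i + 1) hi (by omega) hik h₀ h₁).1

lemma relLoc_succ_le (hv : IsVerticalOrder L k s π) {i : ℕ} (hi : 1 ≤ i)
    (hik : i + 1 ≤ k) (h₀ : π i ≠ 0) (h₁ : π (i + 1) ≠ 0) :
    relLoc π (i + 1) ≤ relLoc π i + 1 := by
  by_cases h : 2 ≤ relLoc π (i + 1)
  · obtain ⟨j, hj, hji, hπj, hrel⟩ := exists_relLoc_add_one_eq h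
    rcases hji.lt_or_eq with hji | rfl
    · have := (hv.2 j i hj hji (by omega) (hπj ▸ h₁) h₀).1
      omega
    · omega
  · have := relLoc_pos (π := π) hi
    omega

end IsVerticalOrder

lemma IsPiJ.ne_zero {L R k j : ℕ} {π : ℕ → ℕ} (hπ : IsPiJ L R k j π) (hj : 1 ≤ j) (hjk : j ≤ k)
    (i : ℕ) (hi : 1 ≤ i) (hik : i ≤ k) (hij : i ≠ j) : π i ≠ 0 := by
  intro hi0
  have hcard : #{x ∈ Icc 1 k | π x = 0} = 1 := by
    rw [hπ.2.1.2 0 (Nat.zero_le L)]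
    rfl
  exact hij (card_le_one.mp hcard.le i (by simp [hi, hik, hi0]) j (by simp [hj, hjk, hπ.1]))

section weight

variable {dI dC : ℕ} {βI βC : ℝ} {π : ℕ → ℕ}

lemma weight_succ_le (hβI : 0 ≤ βI) (hβC : 0 ≤ βC) {i : ℕ} (h₀ : π i ≠ 0)
    (h₁ : π (i + 1) ≠ 0) (hmono : relLoc π i ≤ relLoc π (i + 1))
    (hstep : relLoc π (i + 1) ≤ relLoc π i + 1) :
    weight dI dC βI βC π (i + 1) ≤ weight dI dC βI βC π i := by
  have ha : aCoef dI π (i + 1) ≤ aCoef dI π i := by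
    unfold aCoef
    omega
  have hb : bCoef dC π (i + 1) ≤ bCoef dC π i := by
    have := relLoc_le π i
    unfold bCoef
    omega
  rw [weight, weight, if_neg h₀, if_neg h₁]
  gcongr

lemma sepWeight_le_weight (hβ : βC ≤ βI) (hβC : 0 ≤ βC) (i : ℕ) :
    ((dI + dC + 1 - i : ℕ) : ℝ) * βC ≤ weight dI dC βI βC π i := by
  have hab : dI + dC + 1 - i ≤ aCoef dI π i + bCoef dC π i := by
    have := relLoc_le π i
    unfold aCoef bCoef
    omega
  unfold weight
  split_ifs
  · exact le_rfl
  · calc ((dI + dC + 1 - i : ℕ) : ℝ) * βC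
        ≤ ((aCoef dI π i + bCoef dC π i : ℕ) : ℝ) * βC := by gcongr
      _ = (aCoef dI π i : ℝ) * βC + (bCoef dC π i : ℝ) * βC := by push_cast; ring
      _ ≤ (aCoef dI π i : ℝ) * βI + (bCoef dC π i : ℝ) * βC := by gcongr

end weight

theorem stmt11_general (L R k dI dC : ℕ) (βI βC : ℝ)
    (hR : 2 ≤ R)
    (hdI : dI = R - 1)
    (hβ : βC ≤ βI) (hβC : 0 < βC)
    (π : ℕ → ℕ) (hπ : IsPiJ L R k k π) :
    (∀ i, 1 ≤ i → i + 1 ≤ k - 1 →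
      weight dI dC βI βC π (i + 1) ≤ weight dI dC βI βC π i) ∧
    weight dI dC βI βC π k = ((R + dC - k : ℕ) : ℝ) * βC ∧
    weight dI dC βI βC π k = ((dI + dC + 1 - k : ℕ) : ℝ) * βC ∧
    (∀ i, 1 ≤ i → i ≤ k →
      weight dI dC βI βC π k ≤ weight dI dC βI βC π i) := by
  have hwk : weight dI dC βI βC π k = ((dI + dC + 1 - k : ℕ) : ℝ) * βC := by
    rw [weight, if_pos hπ.1]
  refine ⟨fun i hi hik => ?_, by rw [hwk, hdI]; congr 3; omega, hwk, fun i _ hik => ?_⟩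
  · have h₀ := hπ.ne_zero (by omega) le_rfl i hi (by omega) (by omega)
    have h₁ := hπ.ne_zero (by omega) le_rfl (i + 1) (by omega) (by omega) (by omega)
    exact weight_succ_le (hβC.le.trans hβ) hβC.le h₀ h₁
      (hπ.2.relLoc_le_relLoc_succ hi (by omega) h₀ h₁) (hπ.2.relLoc_succ_le hi (by omega) h₀ h₁)
  · calc weight dI dC βI βC π k = ((dI + dC + 1 - k : ℕ) : ℝ) * βC := hwk
      _ ≤ ((dI + dC + 1 - i : ℕ) : ℝ) * βC := by gcongr
      _ ≤ weight dI dC βI βC π i := sepWeight_le_weight hβ hβC.le i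

/-- the weights of `π^(k)` are nonincreasing over the cluster positions
`1, …, k−1`, and the separate position has minimal weight
`w_k(π^(k)) = (R + d_C − k)·β_C = (d_I + d_C + 1 − k)·β_C`. -/
theorem stmt11 (L R k dI dC : ℕ) (βI βC : ℝ)
    (hL : 1 ≤ L) (hR : 2 ≤ R) (hk : 2 ≤ k)
    (hdI : dI = R - 1) (hdC : 1 ≤ dC) (hkd : k ≤ dI + dC)
    (hβ : βC ≤ βI) (hβC : 0 < βC)
    (hk1LR : k - 1 ≤ L * R)
    (π : ℕ → ℕ) (hπ : IsPiJ L R k k π) :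
    (∀ i, 1 ≤ i → i + 1 ≤ k - 1 →
      weight dI dC βI βC π (i + 1) ≤ weight dI dC βI βC π i) ∧
    weight dI dC βI βC π k = ((R + dC - k : ℕ) : ℝ) * βC ∧
    weight dI dC βI βC π k = ((dI + dC + 1 - k : ℕ) : ℝ) * βC ∧
    (∀ i, 1 ≤ i → i ≤ k →
      weight dI dC βI βC π k ≤ weight dI dC βI βC π i) :=
  stmt11_general L R k dI dC βI βC hR hdI hβ hβC π hπ
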